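/- arXiv:0704.1431 — 4 statements merged into one kernel-verified Lean document; each statement's English description precedes it below -/
import Mathlib

section
/- Let G be a finite simple graph and let F be a finite simple graph on vertex set V(F) that is a Schreier graph with connecting set S: S is a set of permutations of V(F) with S = S⁻¹ and A(F) = Σ_{s∈S} P(s). Let φ be a voltage assignment on G with values in Aut(F), and let Γ be a subgroup of the symmetric group on V(F) containing all values of φ and all elements of S. Let ρ₁, …, ρ_ℓ be group homomorphisms from Γ to the invertible complex f_i×f_i matrices, let m₁, …, m_ℓ be nonnegative integers with Σᵢ mᵢfᵢ = |V(F)|, and suppose there is an invertible complex V(F)×V(F) matrix M such that for every γ ∈ Γ, M⁻¹P(γ)M = ⊕_{i=1}^{ℓ} (I_{mᵢ} ⊗ ρᵢ(γ)). Then for all complex λ, μ: F_{G×^φF}(λ,μ) = ∏_{i=1}^{ℓ} det[ I_{fᵢ} ⊗ ((λ + μ|S|)·I_{V(G)} + μ·D(G)) − Σ_{γ∈Γ} ρᵢ(γ) ⊗ A(G_{φ,γ}) − (Σ_{s∈S} ρᵢ(s)) ⊗ I_{V(G)} ]^{mᵢ}. -/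
open Matrix BigOperators Kronecker
open scoped Classical

noncomputable section

variable {α β : Type*}

def adjM [Fintype α] (G : SimpleGraph α) : Matrix α α ℂ :=
  Matrix.of fun u v => if G.Adj u v then (1 : ℂ) else 0

def degM [Fintype α] (G : SimpleGraph α) : Matrix α α ℂ :=
  Matrix.diagonal fun v => ((G.neighborSet v).ncard : ℂ)

def Fpoly [Fintype α] (G : SimpleGraph α) (lam mu : ℂ) : ℂ :=
  (lam • (1 : Matrix α α ℂ) - (adjM G - mu • degM G)).det

def permM (γ : Equiv.Perm β) : Matrix β β ℂ :=
  Matrix.of fun v w => if γ v = w then (1 : ℂ) else 0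

def voltM [Fintype α] (G : SimpleGraph α) (φ : α → α → Equiv.Perm β) (γ : Equiv.Perm β) :
    Matrix α α ℂ :=
  Matrix.of fun u₁ u₂ => if G.Adj u₁ u₂ ∧ φ u₁ u₂ = γ then (1 : ℂ) else 0

def autPerm (F : SimpleGraph β) : Subgroup (Equiv.Perm β) where
  carrier := {γ | ∀ a b, F.Adj (γ a) (γ b) ↔ F.Adj a b}
  one_mem' := by intro a b; simp
  mul_mem' := by intro γ δ hγ hδ a b; simp [Equiv.Perm.mul_apply, hγ _ _, hδ _ _]
  inv_mem' := by intro γ hγ a b; simpa using (hγ (γ⁻¹ a) (γ⁻¹ b)).symm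

def bundle (G : SimpleGraph α) (F : SimpleGraph β) (φ : α → α → Equiv.Perm β)
    (hsym : ∀ u₁ u₂, G.Adj u₁ u₂ → φ u₂ u₁ = (φ u₁ u₂)⁻¹) : SimpleGraph (β × α) where
  Adj p q := (G.Adj p.2 q.2 ∧ q.1 = φ p.2 q.2 p.1) ∨ (p.2 = q.2 ∧ F.Adj p.1 q.1)
  symm := by
    constructor
    rintro ⟨v₁, u₁⟩ ⟨v₂, u₂⟩ hadj
    dsimp only at hadj ⊢
    rcases hadj with ⟨h, rfl⟩ | ⟨rfl, h⟩
    · left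
      refine ⟨h.symm, ?_⟩
      rw [hsym _ _ h]
      simp
    · right
      exact ⟨rfl, h.symm⟩
  loopless := by
    constructor
    rintro ⟨v, u⟩ hadj
    dsimp only at hadj
    rcases hadj with ⟨h, _⟩ | ⟨_, h⟩
    · exact G.loopless.irrefl u h
    · exact F.loopless.irrefl v h

def dsum [Fintype α] (B : β → Matrix α α ℂ) : Matrix (β × α) (β × α) ℂ :=
  Matrix.of fun p q => if p.1 = q.1 then B p.1 p.2 q.2 else 0

def bigE {ℓ : ℕ} {f m : Fin ℓ → ℕ} (e : β ≃ Σ i : Fin ℓ, Fin (m i) × Fin (f i)) (α : Type*) :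
    β × α ≃ Σ i : Fin ℓ, Fin (m i) × (Fin (f i) × α) :=
  (e.prodCongr (Equiv.refl α)).trans
    ((Equiv.sigmaProdDistrib _ _).trans (Equiv.sigmaCongrRight fun _ => Equiv.prodAssoc _ _ _))

/-!
Every vertex of the bundle has degree `deg_G u + |S|`, and its adjacency matrix splits as
`∑_γ P(γ) ⊗ A(G_{φ,γ}) + A(F) ⊗ I` with `A(F) = ∑_{s ∈ S} P(s)`. So the generalized
characteristic matrix is a combination of Kronecker products `P ⊗ Z` with `P` a permutation
matrix of an element of `Γ`. Conjugating by `M ⊗ I` and reordering the basis turns each such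
term, and hence the whole matrix, into `⊕ᵢ I_{mᵢ} ⊗ Bᵢ`, whose determinant is `∏ᵢ det Bᵢ ^ mᵢ`.
-/
theorem Matrix.kronecker_sub {l m n p R : Type*} [Ring R] (A : Matrix l m R)
    (B C : Matrix n p R) : A ⊗ₖ (B - C) = A ⊗ₖ B - A ⊗ₖ C := by
  ext; simp [mul_sub]

theorem Matrix.kronecker_sum {ι l m n p R : Type*} [NonUnitalNonAssocSemiring R] (s : Finset ι)
    (A : Matrix l m R) (B : ι → Matrix n p R) : A ⊗ₖ (∑ k ∈ s, B k) = ∑ k ∈ s, A ⊗ₖ B k := by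
  ext; simp [Matrix.sum_apply, Finset.mul_sum]

theorem Matrix.sum_kronecker {ι l m n p R : Type*} [NonUnitalNonAssocSemiring R] (s : Finset ι)
    (A : ι → Matrix l m R) (B : Matrix n p R) : (∑ k ∈ s, A k) ⊗ₖ B = ∑ k ∈ s, A k ⊗ₖ B := by
  ext; simp [Matrix.sum_apply, Finset.sum_mul]

theorem Matrix.det_blockDiagonal' {o R : Type*} [Fintype o] [LinearOrder o] [CommRing R]
    {τ : o → Type*} [∀ i, Fintype (τ i)] [∀ i, DecidableEq (τ i)] (B : ∀ i, Matrix (τ i) (τ i) R) :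
    (blockDiagonal' B).det = ∏ i, (B i).det := by
  rw [(blockTriangular_blockDiagonal' B).det_fintype]
  refine Finset.prod_congr rfl fun k _ => ?_
  have hblock : (blockDiagonal' B).toSquareBlock Sigma.fst k
      = (B k).submatrix (Equiv.sigmaSubtype k) (Equiv.sigmaSubtype k) := by
    ext ⟨⟨i, x⟩, hi⟩ ⟨⟨j, y⟩, hj⟩
    obtain rfl : i = k := hi
    obtain rfl : j = i := hj
    simp [toSquareBlock_def, blockDiagonal'_apply_eq]
  rw [hblock, det_submatrix_equiv_self]

theorem permM_one : permM (1 : Equiv.Perm β) = 1 := by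
  ext v w
  simp only [permM, one_apply, of_apply, Equiv.Perm.coe_one, id_eq]
  congr

theorem sum_permM_apply [Fintype β] (γ : Equiv.Perm β) (v : β) : ∑ w, permM γ v w = 1 := by
  simp [permM]

theorem ncard_neighborSet_eq_sum_adjM [Fintype α] (G : SimpleGraph α) (v : α) :
    ((G.neighborSet v).ncard : ℂ) = ∑ w, adjM G v w := by
  simp [adjM, Finset.sum_boole, Set.ncard_eq_toFinset_card', SimpleGraph.neighborSet]

theorem degM_eq_card_smul_one [Fintype β] (F : SimpleGraph β) (S : Finset (Equiv.Perm β))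
    (hSchreier : adjM F = ∑ s ∈ S, permM s) : degM F = (S.card : ℂ) • 1 := by
  have hdeg (v : β) : ((F.neighborSet v).ncard : ℂ) = S.card := by
    rw [ncard_neighborSet_eq_sum_adjM, hSchreier]
    simp only [Matrix.sum_apply]
    rw [Finset.sum_comm]
    simp [sum_permM_apply]
  ext v w
  simp [degM, hdeg, diagonal_apply, one_apply]

section Bundle

variable [Fintype α] [Fintype β] (G : SimpleGraph α) (F : SimpleGraph β)
  (φ : α → α → Equiv.Perm β) (hsym : ∀ u₁ u₂, G.Adj u₁ u₂ → φ u₂ u₁ = (φ u₁ u₂)⁻¹)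

theorem adjM_bundle_apply (v : β) (u : α) (w : β) (u' : α) :
    adjM (bundle G F φ hsym) (v, u) (w, u')
      = (if G.Adj u u' ∧ φ u u' v = w then 1 else 0) + (if u = u' ∧ F.Adj v w then 1 else 0) := by
  rcases eq_or_ne u u' with rfl | hu
  · simp [adjM, bundle]
  · simp [adjM, bundle, hu, eq_comm]

theorem adjM_bundle (Γ : Subgroup (Equiv.Perm β)) (hφΓ : ∀ u₁ u₂, G.Adj u₁ u₂ → φ u₁ u₂ ∈ Γ) :
    adjM (bundle G F φ hsym)
      = ∑ γ : Γ, permM (γ : Equiv.Perm β) ⊗ₖ voltM G φ γ + adjM F ⊗ₖ 1 := by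
  ext ⟨v, u⟩ ⟨w, u'⟩
  rw [adjM_bundle_apply, Matrix.add_apply, Matrix.sum_apply]
  congr 1
  · by_cases hadj : G.Adj u u'
    · rw [Finset.sum_eq_single_of_mem ⟨φ u u', hφΓ u u' hadj⟩ (Finset.mem_univ _)]
      · simp [permM, voltM, hadj]
      · rintro γ - hγ
        have : φ u u' ≠ γ := fun h => hγ (Subtype.ext h.symm)
        simp [voltM, this]
    · simp [voltM, hadj]
  · simp [adjM, one_apply, ite_and]

theorem ncard_neighborSet_bundle (v : β) (u : α) :
    ((bundle G F φ hsym).neighborSet (v, u)).ncard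
      = (G.neighborSet u).ncard + (F.neighborSet v).ncard := by
  have key : (((bundle G F φ hsym).neighborSet (v, u)).ncard : ℂ)
      = ((G.neighborSet u).ncard : ℂ) + (F.neighborSet v).ncard := by
    simp only [ncard_neighborSet_eq_sum_adjM, Fintype.sum_prod_type, adjM_bundle_apply,
      Finset.sum_add_distrib]
    rw [Finset.sum_comm]
    simp [adjM, ite_and]
  exact_mod_cast key

theorem degM_bundle : degM (bundle G F φ hsym) = 1 ⊗ₖ degM G + degM F ⊗ₖ 1 := by
  ext ⟨v, u⟩ ⟨w, u'⟩
  by_cases hv : v = w <;> by_cases hu : u = u' <;>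
    simp [degM, ncard_neighborSet_bundle, one_apply, hv, hu]

theorem genCharMatrix_bundle_of_schreier (S : Finset (Equiv.Perm β))
    (hSchreier : adjM F = ∑ s ∈ S, permM s) (Γ : Subgroup (Equiv.Perm β))
    (hφΓ : ∀ u₁ u₂, G.Adj u₁ u₂ → φ u₁ u₂ ∈ Γ) (lam μ : ℂ) :
    lam • 1 - (adjM (bundle G F φ hsym) - μ • degM (bundle G F φ hsym))
      = 1 ⊗ₖ ((lam + μ * S.card) • 1 + μ • degM G)
        - ∑ γ : Γ, permM (γ : Equiv.Perm β) ⊗ₖ voltM G φ γ - (∑ s ∈ S, permM s) ⊗ₖ 1 := by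
  rw [adjM_bundle G F φ hsym Γ hφΓ, degM_bundle, degM_eq_card_smul_one F S hSchreier, ← hSchreier]
  simp only [kronecker_add, kronecker_smul, smul_kronecker, one_kronecker_one]
  module

theorem fpoly_bundle_of_schreier (S : Finset (Equiv.Perm β))
    (hSchreier : adjM F = ∑ s ∈ S, permM s) (Γ : Subgroup (Equiv.Perm β))
    (hφΓ : ∀ u₁ u₂, G.Adj u₁ u₂ → φ u₁ u₂ ∈ Γ) (lam μ : ℂ) :
    Fpoly (bundle G F φ hsym) lam μ
      = (1 ⊗ₖ ((lam + μ * S.card) • 1 + μ • degM G)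
        - ∑ γ : Γ, permM (γ : Equiv.Perm β) ⊗ₖ voltM G φ γ - (∑ s ∈ S, permM s) ⊗ₖ 1).det := by
  rw [Fpoly]
  -- `Fpoly` builds `1 : Matrix (β × α) _ ℂ` from the classical `DecidableEq (β × α)`, while
  -- `one_kronecker_one` produces the product instance; `convert` identifies the two.
  convert congrArg det (genCharMatrix_bundle_of_schreier G F φ hsym S hSchreier Γ hφΓ lam μ)

end Bundle

theorem bigE_symm_apply {ℓ : ℕ} {f m : Fin ℓ → ℕ} (e : β ≃ Σ i : Fin ℓ, Fin (m i) × Fin (f i))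
    (i : Fin ℓ) (a : Fin (m i)) (b : Fin (f i)) (u : α) :
    (bigE e α).symm ⟨i, a, b, u⟩ = (e.symm ⟨i, a, b⟩, u) :=
  rfl

section BlockDecomposition

variable [Fintype β] {ℓ : ℕ} {f m : Fin ℓ → ℕ} (M : Matrix β β ℂ)
  (e : β ≃ Σ i : Fin ℓ, Fin (m i) × Fin (f i))

def IsBlockDecomposition [Fintype α] (X : Matrix (β × α) (β × α) ℂ)
    (B : ∀ i, Matrix (Fin (f i) × α) (Fin (f i) × α) ℂ) : Prop :=
  reindex (bigE e α) (bigE e α) ((M ⊗ₖ 1)⁻¹ * X * (M ⊗ₖ 1))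
    = blockDiagonal' fun i => (1 : Matrix (Fin (m i)) (Fin (m i)) ℂ) ⊗ₖ B i

variable {M e} [Fintype α]

theorem IsBlockDecomposition.sub {X Y : Matrix (β × α) (β × α) ℂ}
    {B C : ∀ i, Matrix (Fin (f i) × α) (Fin (f i) × α) ℂ}
    (hX : IsBlockDecomposition M e X B) (hY : IsBlockDecomposition M e Y C) :
    IsBlockDecomposition M e (X - Y) (B - C) := by
  rw [IsBlockDecomposition, Matrix.mul_sub, Matrix.sub_mul, ← coe_reindexLinearEquiv ℂ ℂ, map_sub,
    coe_reindexLinearEquiv, hX, hY, ← blockDiagonal'_sub]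
  simp only [Pi.sub_apply, kronecker_sub]
  rfl

theorem IsBlockDecomposition.sum {ι : Type*} {s : Finset ι} {X : ι → Matrix (β × α) (β × α) ℂ}
    {B : ι → ∀ i, Matrix (Fin (f i) × α) (Fin (f i) × α) ℂ}
    (h : ∀ k ∈ s, IsBlockDecomposition M e (X k) (B k)) :
    IsBlockDecomposition M e (∑ k ∈ s, X k) (fun i => ∑ k ∈ s, B k i) := by
  unfold IsBlockDecomposition at *
  rw [Matrix.mul_sum, Matrix.sum_mul, ← coe_reindexLinearEquiv ℂ ℂ, map_sum,
    coe_reindexLinearEquiv, Finset.sum_congr rfl h]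
  ext ⟨i, x⟩ ⟨j, y⟩
  rcases eq_or_ne i j with rfl | hij
  · simp [Matrix.sum_apply, blockDiagonal'_apply_eq, kronecker_sum]
  · simp [Matrix.sum_apply, blockDiagonal'_apply_ne _ _ _ hij]

theorem isBlockDecomposition_kronecker {P : Matrix β β ℂ}
    {R : ∀ i, Matrix (Fin (f i)) (Fin (f i)) ℂ}
    (hP : reindex e e (M⁻¹ * P * M)
      = blockDiagonal' fun i => (1 : Matrix (Fin (m i)) (Fin (m i)) ℂ) ⊗ₖ R i)
    (Z : Matrix α α ℂ) :
    IsBlockDecomposition M e (P ⊗ₖ Z) (fun i => R i ⊗ₖ Z) := by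
  rw [IsBlockDecomposition, inv_kronecker, inv_one, ← mul_kronecker_mul, ← mul_kronecker_mul,
    Matrix.one_mul, Matrix.mul_one]
  ext ⟨i, a, b, u⟩ ⟨j, a', b', u'⟩
  have hentry := congr_fun₂ hP ⟨i, a, b⟩ ⟨j, a', b'⟩
  rw [reindex_apply, submatrix_apply] at hentry
  simp only [reindex_apply, submatrix_apply, bigE_symm_apply, kronecker_apply, hentry]
  rcases eq_or_ne i j with rfl | hij
  · simp [blockDiagonal'_apply_eq, mul_assoc]
  · simp [blockDiagonal'_apply_ne _ _ _ hij]

theorem IsBlockDecomposition.det_eq {X : Matrix (β × α) (β × α) ℂ}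
    {B : ∀ i, Matrix (Fin (f i) × α) (Fin (f i) × α) ℂ} (hX : IsBlockDecomposition M e X B)
    (hM : IsUnit M.det) : X.det = ∏ i, (B i).det ^ m i := by
  have hMα : IsUnit (M ⊗ₖ (1 : Matrix α α ℂ)) := by
    rw [isUnit_iff_isUnit_det, det_kronecker, det_one, one_pow, mul_one]
    exact hM.pow _
  rw [← det_conj' hMα, ← det_reindex_self (bigE e α), hX, det_blockDiagonal']
  simp [det_kronecker]

end BlockDecomposition

theorem genCharPoly_of_schreier_bundle_general
    {α β : Type*} [Fintype α] [Fintype β]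
    (G : SimpleGraph α) (F : SimpleGraph β)
    (S : Finset (Equiv.Perm β))
    (hSchreier : adjM F = ∑ s ∈ S, permM s)
    (φ : α → α → Equiv.Perm β)
    (hsym : ∀ u₁ u₂, G.Adj u₁ u₂ → φ u₂ u₁ = (φ u₁ u₂)⁻¹)
    (Γ : Subgroup (Equiv.Perm β))
    (hφΓ : ∀ u₁ u₂, G.Adj u₁ u₂ → φ u₁ u₂ ∈ Γ)
    (hSΓ : ∀ s ∈ S, s ∈ Γ)
    (ℓ : ℕ) (f m : Fin ℓ → ℕ) (ρ : ∀ i : Fin ℓ, Γ →* GL (Fin (f i)) ℂ)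
    (e : β ≃ Σ i : Fin ℓ, Fin (m i) × Fin (f i))
    (M : Matrix β β ℂ) (hM : IsUnit M.det)
    (hP : ∀ γ : Γ, Matrix.reindex e e (M⁻¹ * permM (γ : Equiv.Perm β) * M)
        = Matrix.blockDiagonal' fun i =>
            (1 : Matrix (Fin (m i)) (Fin (m i)) ℂ)
              ⊗ₖ (ρ i γ : Matrix (Fin (f i)) (Fin (f i)) ℂ))
    (lam μ : ℂ) :
    Fpoly (bundle G F φ hsym) lam μ
      = ∏ i : Fin ℓ,
          (Matrix.det
            ((1 : Matrix (Fin (f i)) (Fin (f i)) ℂ)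
                ⊗ₖ ((lam + μ * (S.card : ℂ)) • (1 : Matrix α α ℂ) + μ • degM G)
              - (∑ γ : Γ, (ρ i γ : Matrix (Fin (f i)) (Fin (f i)) ℂ)
                  ⊗ₖ voltM G φ (γ : Equiv.Perm β))
              - (∑ s ∈ S.attach,
                  (ρ i ⟨(s : Equiv.Perm β), hSΓ s s.2⟩
                    : Matrix (Fin (f i)) (Fin (f i)) ℂ))
                ⊗ₖ (1 : Matrix α α ℂ))) ^ (m i) := by
  have hOne : reindex e e (M⁻¹ * 1 * M) = blockDiagonal' fun i =>
      (1 : Matrix (Fin (m i)) (Fin (m i)) ℂ) ⊗ₖ (1 : Matrix (Fin (f i)) (Fin (f i)) ℂ) := by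
    simpa [permM_one] using hP 1
  have hVolt := IsBlockDecomposition.sum (s := Finset.univ) fun γ _ =>
    isBlockDecomposition_kronecker (hP γ) (voltM G φ γ)
  have hFibre := IsBlockDecomposition.sum (s := S.attach) fun s _ =>
    isBlockDecomposition_kronecker (hP ⟨s, hSΓ s s.2⟩) (1 : Matrix α α ℂ)
  rw [fpoly_bundle_of_schreier G F φ hsym S hSchreier Γ hφΓ,
    ← Finset.sum_attach S permM, sum_kronecker,
    (((isBlockDecomposition_kronecker hOne _).sub hVolt).sub hFibre).det_eq hM]
  simp only [Pi.sub_apply, sum_kronecker]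

theorem genCharPoly_of_schreier_bundle
    {α β : Type*} [Fintype α] [Fintype β]
    (G : SimpleGraph α) (F : SimpleGraph β)
    (S : Finset (Equiv.Perm β)) (hSinv : ∀ s ∈ S, s⁻¹ ∈ S)
    (hSchreier : adjM F = ∑ s ∈ S, permM s)
    (φ : α → α → Equiv.Perm β)
    (hsym : ∀ u₁ u₂, G.Adj u₁ u₂ → φ u₂ u₁ = (φ u₁ u₂)⁻¹)
    (hAut : ∀ u₁ u₂, G.Adj u₁ u₂ → φ u₁ u₂ ∈ autPerm F)
    (Γ : Subgroup (Equiv.Perm β))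
    (hφΓ : ∀ u₁ u₂, G.Adj u₁ u₂ → φ u₁ u₂ ∈ Γ)
    (hSΓ : ∀ s ∈ S, s ∈ Γ)
    (ℓ : ℕ) (f m : Fin ℓ → ℕ) (ρ : ∀ i : Fin ℓ, Γ →* GL (Fin (f i)) ℂ)
    (hsum : ∑ i, m i * f i = Fintype.card β)
    (e : β ≃ Σ i : Fin ℓ, Fin (m i) × Fin (f i))
    (M : Matrix β β ℂ) (hM : IsUnit M.det)
    (hP : ∀ γ : Γ, Matrix.reindex e e (M⁻¹ * permM (γ : Equiv.Perm β) * M)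
        = Matrix.blockDiagonal' fun i =>
            (1 : Matrix (Fin (m i)) (Fin (m i)) ℂ)
              ⊗ₖ (ρ i γ : Matrix (Fin (f i)) (Fin (f i)) ℂ))
    (lam μ : ℂ) :
    Fpoly (bundle G F φ hsym) lam μ
      = ∏ i : Fin ℓ,
          (Matrix.det
            ((1 : Matrix (Fin (f i)) (Fin (f i)) ℂ)
                ⊗ₖ ((lam + μ * (S.card : ℂ)) • (1 : Matrix α α ℂ) + μ • degM G)
              - (∑ γ : Γ, (ρ i γ : Matrix (Fin (f i)) (Fin (f i)) ℂ)
                  ⊗ₖ voltM G φ (γ : Equiv.Perm β))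
              - (∑ s ∈ S.attach,
                  (ρ i ⟨(s : Equiv.Perm β), hSΓ s s.2⟩
                    : Matrix (Fin (f i)) (Fin (f i)) ℂ))
                ⊗ₖ (1 : Matrix α α ℂ))) ^ (m i) :=
  genCharPoly_of_schreier_bundle_general G F S hSchreier φ hsym Γ hφΓ hSΓ ℓ f m ρ e M hM hP lam μ

end
end

section
/- Let G be a finite simple graph and F a finite simple graph that is regular of degree r. Then for all complex λ, μ: F_{G□F}(λ,μ) = ∏_{t} F_G(λ + rμ − t, μ), where the product runs over the multiset of roots t (with multiplicity) of the characteristic polynomial of A(F) over ℂ and G□F denotes the Cartesian (box) product of G and F. -/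
open Matrix BigOperators Kronecker
open scoped Classical

noncomputable section

variable {α β : Type*}

/-!
For `r`-regular `F` we have `D(G □ F) = D(G) ⊗ 1 + r • 1`, so the matrix defining `F_{G □ F}(λ, μ)`
is `B ⊗ 1 - 1 ⊗ A(F)` with `B = (λ + rμ) • 1 - (A(G) - μ D(G))`. Conjugating by `1 ⊗ U`, where `U`
unitarily diagonalizes the symmetric matrix `A(F)`, makes it block diagonal with blocks `B - t • 1`,
one for each eigenvalue `t` of `A(F)`.
-/

theorem Matrix.sub_kronecker {R l m n p : Type*} [Ring R] (A₁ A₂ : Matrix l m R)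
    (B : Matrix n p R) : (A₁ - A₂) ⊗ₖ B = A₁ ⊗ₖ B - A₂ ⊗ₖ B :=
  ext fun _ _ => sub_mul _ _ _

namespace Matrix.IsHermitian

variable [Fintype α] [Fintype β] {𝕜 : Type*} [RCLike 𝕜]

theorem det_kronecker_one_sub_one_kronecker (B : Matrix α α 𝕜) {A : Matrix β β 𝕜}
    (hA : A.IsHermitian) :
    (B ⊗ₖ 1 - 1 ⊗ₖ A).det = (A.charpoly.roots.map fun t => (B - t • 1).det).prod := by
  set U : Matrix β β 𝕜 := (hA.eigenvectorUnitary : Matrix β β 𝕜)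
  set d : β → 𝕜 := RCLike.ofReal ∘ hA.eigenvalues
  have hUU : star U * U = 1 := mem_unitaryGroup_iff'.mp hA.eigenvectorUnitary.2
  have hUU' : U * star U = 1 := mem_unitaryGroup_iff.mp hA.eigenvectorUnitary.2
  have hspec : U * diagonal d * star U = A := hA.spectral_theorem.symm
  have hconj : (1 ⊗ₖ U) * (B ⊗ₖ 1 - 1 ⊗ₖ diagonal d) * (1 ⊗ₖ star U) = B ⊗ₖ 1 - 1 ⊗ₖ A := by
    simp only [Matrix.mul_sub, Matrix.sub_mul, ← mul_kronecker_mul, Matrix.one_mul,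
      Matrix.mul_one, hUU', hspec]
  have hblock : B ⊗ₖ 1 - 1 ⊗ₖ diagonal d = blockDiagonal fun b => B - d b • 1 := by
    ext ⟨a, b⟩ ⟨a', b'⟩
    by_cases hb : b = b' <;> by_cases ha : a = a' <;>
      simp [blockDiagonal_apply, ha, hb]
  rw [← hconj, det_mul_comm, ← Matrix.mul_assoc, ← mul_kronecker_mul, Matrix.one_mul, hUU,
    one_kronecker_one, Matrix.one_mul, hblock, det_blockDiagonal,
    hA.roots_charpoly_eq_eigenvalues, Multiset.map_map, ← Finset.prod_eq_multiset_prod]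
  congr!

end Matrix.IsHermitian

theorem SimpleGraph.ncard_neighborSet_eq_degree (G : SimpleGraph α) (v : α)
    [Fintype (G.neighborSet v)] : (G.neighborSet v).ncard = G.degree v := by
  rw [Set.ncard_eq_toFinset_card', degree, neighborFinset]

section GraphMatrices

variable [Fintype α] [Fintype β]

theorem adjM_isHermitian (G : SimpleGraph α) : (adjM G).IsHermitian := by
  ext u v
  simp [adjM, G.adj_comm]

theorem adjM_boxProd (G : SimpleGraph α) (F : SimpleGraph β) :
    adjM (G □ F) = adjM G ⊗ₖ 1 + 1 ⊗ₖ adjM F := by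
  ext ⟨a, b⟩ ⟨a', b'⟩
  by_cases ha : a = a' <;> by_cases hb : b = b' <;>
    simp [adjM, one_apply, ha, hb]

theorem degM_boxProd (G : SimpleGraph α) (F : SimpleGraph β) :
    degM (G □ F) = degM G ⊗ₖ 1 + 1 ⊗ₖ degM F := by
  simp only [degM, ← diagonal_one, diagonal_kronecker_diagonal, mul_one, one_mul, diagonal_add]
  congr! 2 with x
  simp only [SimpleGraph.ncard_neighborSet_eq_degree, SimpleGraph.degree_boxProd, Nat.cast_add]

theorem degM_eq_smul_one_of_regular {F : SimpleGraph β} {r : ℕ}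
    (hreg : ∀ v, (F.neighborSet v).ncard = r) : degM F = (r : ℂ) • 1 := by
  simp [degM, hreg, smul_one_eq_diagonal]

end GraphMatrices

theorem genCharPoly_of_cartesian_product
    {α β : Type*} [Fintype α] [Fintype β]
    (G : SimpleGraph α) (F : SimpleGraph β)
    (r : ℕ) (hreg : ∀ v, (F.neighborSet v).ncard = r)
    (lam μ : ℂ) :
    Fpoly (G.boxProd F) lam μ
      = (((adjM F).charpoly.roots).map fun t => Fpoly G (lam + (r : ℂ) * μ - t) μ).prod := by
  set B := (lam + r * μ) • (1 : Matrix α α ℂ) - (adjM G - μ • degM G)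
  have hsplit : lam • 1 - (adjM (G □ F) - μ • degM (G □ F)) = B ⊗ₖ 1 - 1 ⊗ₖ adjM F := by
    rw [adjM_boxProd, degM_boxProd, degM_eq_smul_one_of_regular hreg]
    simp only [B, sub_kronecker, smul_kronecker, kronecker_smul, one_kronecker_one]
    module
  have hfactor (t : ℂ) : Fpoly G (lam + r * μ - t) μ = (B - t • 1).det := by
    rw [Fpoly, sub_smul, sub_right_comm]
  simp only [hfactor]
  rw [Fpoly, ← (adjM_isHermitian F).det_kronecker_one_sub_one_kronecker, ← hsplit]
  -- `Fpoly` builds its identity matrix from `Classical.propDecidable` on `α × β`, not from the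
  -- product instance used in `hsplit`.
  congr!

end
end

section
/- Let 𝒜 be a finite abelian group of order n. Let G be a finite simple graph and φ a voltage assignment on G with values in 𝒜 (i.e., φ(u₂,u₁) = φ(u₁,u₂)⁻¹ for adjacent pairs), and let G×^φK_n be the graph on V(G)×𝒜 in which (u₁,a) and (u₂,b) are adjacent iff either u₁ and u₂ are adjacent in G and b = φ(u₁,u₂)·a, or u₁ = u₂ and a ≠ b (so the fiber is the complete graph on the n elements of 𝒜). Let χ₁, χ₂, …, χ_n be an enumeration of all group homomorphisms 𝒜 → ℂˣ with χ₁ the trivial one, and for each i let A_{χᵢ} be the V(G)×V(G) matrix whose (u₁,u₂)-entry is χᵢ(φ(u₁,u₂)) if u₁ and u₂ are adjacent in G and 0 otherwise. Then for all complex λ, μ: F_{G×^φK_n}(λ,μ) = F_G(λ + (n−1)(μ−1), μ) · ∏_{i=2}^{n} det( (λ + (n−1)μ + 1)·I_{V(G)} − (A_{χᵢ} − μ·D(G)) ). -/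
open Matrix BigOperators Kronecker
open scoped Classical

noncomputable section

variable {α β : Type*}

def completeFiberBundle {α A : Type*} [CommGroup A] (G : SimpleGraph α)
    (φ : α → α → A) (hsym : ∀ u₁ u₂, G.Adj u₁ u₂ → φ u₂ u₁ = (φ u₁ u₂)⁻¹) :
    SimpleGraph (α × A) where
  Adj p q := (G.Adj p.1 q.1 ∧ q.2 = φ p.1 q.1 * p.2) ∨ (p.1 = q.1 ∧ p.2 ≠ q.2)
  symm := by
    constructor
    rintro ⟨u₁, a⟩ ⟨u₂, b⟩ hadj
    dsimp only at hadj ⊢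
    rcases hadj with ⟨h, rfl⟩ | ⟨rfl, h⟩
    · left
      refine ⟨h.symm, ?_⟩
      rw [hsym _ _ h]
      exact (inv_mul_cancel_left _ _).symm
    · right
      exact ⟨rfl, h.symm⟩
  loopless := by
    constructor
    rintro ⟨u, a⟩ hadj
    dsimp only at hadj
    rcases hadj with ⟨h, _⟩ | ⟨_, h⟩
    · exact G.loopless.irrefl u h
    · exact h rfl

def charM {α A : Type*} [Fintype α] [CommGroup A] (G : SimpleGraph α)
    (φ : α → α → A) (χ : A →* ℂˣ) : Matrix α α ℂ :=
  Matrix.of fun u₁ u₂ => if G.Adj u₁ u₂ then (χ (φ u₁ u₂) : ℂ) else 0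

/-!
Block-diagonalise along the fibres. For a character `ψ` of `A` and `f : V(G) → ℂ`, the matrix
`λI - (A - μD)` of the bundle sends `f ⊗ ψ` to `(fiberBlock ψ * f) ⊗ ψ`: a voltage `a` acts on
`ψ` as the scalar `ψ a`, and the complete fibre `J - I` as `∑ ψ - 1`. Dedekind's independence of
characters makes the fibrewise change of basis `c, b ↦ ψ_b c` invertible, so the determinant is
`∏ ψ, det (fiberBlock ψ)`, where `∑ ψ` is `n` for the trivial character and `0` otherwise.
-/

section BlockDiagonalization
variable {R m n : Type*} [CommRing R] [Fintype m] [Fintype n] [DecidableEq m] [DecidableEq n]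

theorem Matrix.det_eq_prod_det_of_sum_fiber_mul_eq (M : Matrix (m × n) (m × n) R)
    (P : Matrix n n R) (hP : IsUnit P.det) (B : n → Matrix m m R)
    (h : ∀ u v c b, ∑ d, M (u, c) (v, d) * P d b = P c b * B b u v) :
    M.det = ∏ b, (B b).det := by
  have hconj : M * (1 ⊗ₖ P) = (1 ⊗ₖ P) * blockDiagonal B := by
    ext ⟨u, c⟩ ⟨v, b⟩
    simp [mul_apply, Fintype.sum_prod_type, one_apply, blockDiagonal_apply, h]
  have hunit : IsUnit (1 ⊗ₖ P : Matrix (m × n) (m × n) R).det := by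
    simpa [det_kronecker] using hP.pow (Fintype.card m)
  apply hunit.mul_left_cancel
  rw [← det_blockDiagonal, mul_comm, ← det_mul, hconj, det_mul]

end BlockDiagonalization

theorem isUnit_characterMatrix_of_injective {K M : Type*} [Field K] [MulOneClass M] [Fintype M]
    [DecidableEq M] (ψ : M → (M →* Kˣ)) (hψ : Function.Injective ψ) :
    IsUnit (Matrix.of fun c b => (ψ b c : K)) := by
  rw [← linearIndependent_cols_iff_isUnit]
  have hinj : Function.Injective fun b => (Units.coeHom K).comp (ψ b) := fun b b' h =>
    hψ (MonoidHom.ext fun c => Units.ext (DFunLike.congr_fun h c))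
  exact (linearIndependent_monoidHom M K).comp _ hinj

theorem MonoidHom.mul_sum_eq_sum {G R : Type*} [Group G] [Fintype G] [CommSemiring R]
    (f : G →* R) (c : G) : f c * ∑ g, f g = ∑ g, f g := by
  rw [Finset.mul_sum]
  simp_rw [← map_mul]
  exact Equiv.sum_comp (Equiv.mulLeft c) f

section CompleteFiberBundle
variable {α A : Type*} [CommGroup A] (G : SimpleGraph α) (φ : α → α → A)
  (hsym : ∀ u₁ u₂, G.Adj u₁ u₂ → φ u₂ u₁ = (φ u₁ u₂)⁻¹)

theorem completeFiberBundle_neighborSet (u : α) (a : A) :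
    (completeFiberBundle G φ hsym).neighborSet (u, a)
      = (fun v => (v, φ u v * a)) '' G.neighborSet u ∪ Prod.mk u '' {a}ᶜ := by
  ext ⟨v, b⟩
  simp only [SimpleGraph.mem_neighborSet, completeFiberBundle, Set.mem_union, Set.mem_image,
    Set.mem_compl_iff, Set.mem_singleton_iff, Prod.mk.injEq]
  constructor
  · rintro (⟨h, rfl⟩ | ⟨rfl, h⟩)
    · exact Or.inl ⟨v, h, rfl, rfl⟩
    · exact Or.inr ⟨b, Ne.symm h, rfl, rfl⟩
  · rintro (⟨w, hw, rfl, rfl⟩ | ⟨c, hc, rfl, rfl⟩)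
    · exact Or.inl ⟨hw, rfl⟩
    · exact Or.inr ⟨rfl, Ne.symm hc⟩

theorem ncard_neighborSet_completeFiberBundle_add_one [Finite α] [Fintype A] (u : α) (a : A) :
    ((completeFiberBundle G φ hsym).neighborSet (u, a)).ncard + 1
      = (G.neighborSet u).ncard + Fintype.card A := by
  have hdisj : Disjoint ((fun v => (v, φ u v * a)) '' G.neighborSet u) (Prod.mk u '' {a}ᶜ) := by
    rw [Set.disjoint_left]
    rintro _ ⟨v, hv, rfl⟩ ⟨c, -, hc⟩
    exact G.ne_of_adj hv (congrArg Prod.fst hc)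
  rw [completeFiberBundle_neighborSet, Set.ncard_union_eq hdisj,
    Set.ncard_image_of_injective _ fun v w h => congrArg Prod.fst h,
    Set.ncard_image_of_injective _ (Prod.mk_right_injective u), add_assoc,
    ← Set.ncard_singleton a, Set.ncard_compl_add_ncard, Nat.card_eq_fintype_card]

variable [Fintype α] [Fintype A]

def fiberBlock (lam μ : ℂ) (ψ : A →* ℂˣ) : Matrix α α ℂ :=
  (lam + ((Fintype.card A : ℂ) - 1) * μ + 1 - ∑ a, (ψ a : ℂ)) • 1 - (charM G φ ψ - μ • degM G)

theorem fiberBlock_one (lam μ : ℂ) :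
    fiberBlock G φ lam μ 1
      = (lam + ((Fintype.card A : ℂ) - 1) * (μ - 1)) • 1 - (adjM G - μ • degM G) := by
  have hcharM : charM G φ (1 : A →* ℂˣ) = adjM G := by
    ext u v
    simp [charM, adjM]
  rw [fiberBlock, hcharM]
  congr 2
  simp only [MonoidHom.one_apply, Units.val_one, Finset.sum_const, Finset.card_univ, nsmul_eq_mul,
    mul_one]
  ring

theorem fiberBlock_of_ne_one (lam μ : ℂ) {ψ : A →* ℂˣ} (hψ : ψ ≠ 1) :
    fiberBlock G φ lam μ ψ
      = (lam + ((Fintype.card A : ℂ) - 1) * μ + 1) • 1 - (charM G φ ψ - μ • degM G) := by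
  have hne : (Units.coeHom ℂ).comp ψ ≠ 1 := fun h =>
    hψ (MonoidHom.ext fun a => Units.ext (DFunLike.congr_fun h a))
  have hsum := sum_hom_units_eq_zero _ hne
  simp only [MonoidHom.comp_apply, Units.coeHom_apply] at hsum
  rw [fiberBlock, hsum, sub_zero]

theorem sum_adjM_completeFiberBundle_mul (ψ : A →* ℂˣ) (u v : α) (c : A) :
    ∑ d, adjM (completeFiberBundle G φ hsym) (u, c) (v, d) * (ψ d : ℂ)
      = ψ c * (charM G φ ψ u v + if u = v then ∑ a, (ψ a : ℂ) - 1 else 0) := by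
  by_cases huv : u = v
  · subst huv
    have hmul := ((Units.coeHom ℂ).comp ψ).mul_sum_eq_sum c
    simp only [MonoidHom.comp_apply, Units.coeHom_apply] at hmul
    simp only [adjM, completeFiberBundle, ne_eq, of_apply, SimpleGraph.irrefl, false_and, true_and,
      false_or, ite_not, ite_mul, zero_mul, one_mul, Finset.sum_ite, Finset.sum_const_zero,
      Finset.filter_ne, Finset.mem_univ, Finset.sum_erase_eq_sub, zero_add, charM, ↓reduceIte]
    linear_combination -hmul
  · by_cases hadj : G.Adj u v <;> simp [adjM, completeFiberBundle, charM, huv, hadj, mul_comm]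

theorem sum_genCharMatrix_completeFiberBundle_mul (lam μ : ℂ) (ψ : A →* ℂˣ) (u v : α) (c : A) :
    ∑ d, (lam • (1 : Matrix (α × A) (α × A) ℂ) - (adjM (completeFiberBundle G φ hsym)
        - μ • degM (completeFiberBundle G φ hsym))) (u, c) (v, d) * (ψ d : ℂ)
      = ψ c * fiberBlock G φ lam μ ψ u v := by
  have hdeg : (((completeFiberBundle G φ hsym).neighborSet (u, c)).ncard : ℂ) + 1
      = (G.neighborSet u).ncard + Fintype.card A := by
    exact_mod_cast ncard_neighborSet_completeFiberBundle_add_one G φ hsym u c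
  simp only [Matrix.sub_apply, Matrix.smul_apply, smul_eq_mul, sub_mul, Finset.sum_sub_distrib]
  rw [sum_adjM_completeFiberBundle_mul]
  by_cases huv : u = v
  · subst huv
    simp only [fiberBlock, degM, charM, Matrix.sub_apply, Matrix.smul_apply, one_apply,
      diagonal_apply, of_apply, Prod.mk.injEq, true_and, smul_eq_mul, mul_ite, mul_one, mul_zero,
      ite_mul, zero_mul, Finset.sum_ite_eq, Finset.mem_univ, ↓reduceIte, SimpleGraph.irrefl,
      zero_add, zero_sub, sub_neg_eq_add]
    linear_combination (μ * ψ c) * hdeg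
  · simp [fiberBlock, degM, one_apply, huv]

end CompleteFiberBundle

theorem genCharPoly_of_complete_fiber_bundle
    {α A : Type*} [Fintype α] [CommGroup A] [Fintype A]
    (n : ℕ) (hcard : Fintype.card A = n) (hn0 : 0 < n)
    (G : SimpleGraph α) (φ : α → α → A)
    (hsym : ∀ u₁ u₂, G.Adj u₁ u₂ → φ u₂ u₁ = (φ u₁ u₂)⁻¹)
    (χ : Fin n → (A →* ℂˣ)) (hχ : Function.Bijective χ)
    (hχ1 : χ ⟨0, hn0⟩ = 1)
    (lam μ : ℂ) :
    Fpoly (completeFiberBundle G φ hsym) lam μ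
      = Fpoly G (lam + ((n : ℂ) - 1) * (μ - 1)) μ *
          ∏ i ∈ Finset.univ.erase ⟨0, hn0⟩,
            Matrix.det
              ((lam + ((n : ℂ) - 1) * μ + 1) • (1 : Matrix α α ℂ)
                - (charM G φ (χ i) - μ • degM G)) := by
  let e : A ≃ Fin n := Fintype.equivFinOfCardEq hcard
  have hP := isUnit_characterMatrix_of_injective (fun b => χ (e b)) (hχ.injective.comp e.injective)
  have hdet : Fpoly (completeFiberBundle G φ hsym) lam μ
      = ∏ i, (fiberBlock G φ lam μ (χ i)).det := by
    rw [Fpoly, ← e.prod_comp fun i => (fiberBlock G φ lam μ (χ i)).det]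
    -- `convert` identifies the classical `DecidableEq (α × A)` inside `Fpoly` with the product one.
    convert Matrix.det_eq_prod_det_of_sum_fiber_mul_eq
      (lam • (1 : Matrix (α × A) (α × A) ℂ) - (adjM (completeFiberBundle G φ hsym)
        - μ • degM (completeFiberBundle G φ hsym))) _ ((isUnit_iff_isUnit_det _).mp hP)
      (fun b => fiberBlock G φ lam μ (χ (e b))) (fun u v c b => by
        simpa only [of_apply] using
          sum_genCharMatrix_completeFiberBundle_mul G φ hsym lam μ (χ (e b)) u v c)
  rw [hdet, ← Finset.mul_prod_erase _ _ (Finset.mem_univ ⟨0, hn0⟩), hχ1, fiberBlock_one, hcard]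
  congr 1
  refine Finset.prod_congr rfl fun i hi => ?_
  have hne : χ i ≠ 1 := fun h => Finset.ne_of_mem_erase hi (hχ.injective (h.trans hχ1.symm))
  rw [fiberBlock_of_ne_one G φ lam μ hne, hcard]

end
end

section
/- Let G be a finite simple graph, let K_n be the complete graph on n vertices, and let G□K_n denote their Cartesian (box) product. Then for all complex λ, μ: F_{G□K_n}(λ,μ) = F_G(λ + (n−1)(μ−1), μ) · F_G(λ + (n−1)μ + 1, μ)^{n−1}. -/
open Matrix BigOperators Kronecker
open scoped Classical

noncomputable section

variable {α β : Type*}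

/-
Write `M_H(μ) = A(H) - μ D(H)`. Both the adjacency and the degree matrix of a box product split as
`X_G ⊗ 1 + 1 ⊗ X_H`, so the matrix defining `F_{G□H}(λ, μ)` is `(λ - M_G(μ)) ⊗ 1 - 1 ⊗ M_H(μ)`.
If `M_H(μ)` is diagonalised by `P` with eigenvalues `d i`, conjugating by `1 ⊗ P` makes this block
diagonal with blocks `(λ - d i) - M_G(μ)`, so `F_{G□H}(λ, μ) = ∏ i, F_G(λ - d i, μ)`. For
`H = K_n` we have `M_H(μ) = J - (1 + (n - 1)μ)`, and the all-ones matrix `J` has eigenvalue `n`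
once and `0` with multiplicity `n - 1`.
-/

namespace Matrix

variable {R m n : Type*} [CommRing R] [Fintype m] [DecidableEq m] [Fintype n] [DecidableEq n]

theorem det_kronecker_one_sub_one_kronecker_of_eigenbasis (C : Matrix m m R)
    {B P Q : Matrix n n R} {d : n → R} (hPQ : P * Q = 1) (hBP : B * P = P * diagonal d) :
    det (C ⊗ₖ (1 : Matrix n n R) - (1 : Matrix m m R) ⊗ₖ B) = ∏ i, det (C - d i • 1) := by
  set U : Matrix (m × n) (m × n) R := 1 ⊗ₖ P
  set V : Matrix (m × n) (m × n) R := 1 ⊗ₖ Q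
  have hUV : U * V = 1 := by rw [← mul_kronecker_mul, one_mul, hPQ, one_kronecker_one]
  have hconj : C ⊗ₖ (1 : Matrix n n R) - 1 ⊗ₖ B = U * (C ⊗ₖ 1 - 1 ⊗ₖ diagonal d) * V := by
    rw [mul_sub, ← mul_kronecker_mul, ← mul_kronecker_mul, one_mul, one_mul, mul_one, ← hBP,
      sub_mul, ← mul_kronecker_mul, ← mul_kronecker_mul, hPQ, mul_one, one_mul,
      mul_assoc, hPQ, mul_one]
  have hblock : C ⊗ₖ (1 : Matrix n n R) - 1 ⊗ₖ diagonal d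
      = blockDiagonal fun i => C - d i • 1 := by
    ext ⟨u, i⟩ ⟨v, j⟩
    by_cases hij : i = j <;> simp [blockDiagonal_apply, one_apply, hij]
  have hdetUV : det U * det V = 1 := by rw [← det_mul, hUV, det_one]
  rw [hconj, det_mul, det_mul, mul_right_comm, hdetUV, one_mul, hblock, det_blockDiagonal]

theorem sub_smul_one_mul_eq_mul_diagonal {B P : Matrix n n R} {d : n → R}
    (hBP : B * P = P * diagonal d) (c : R) :
    (B - c • 1) * P = P * diagonal fun i => d i - c := by
  ext i j
  rw [sub_mul, hBP, smul_mul, one_mul]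
  simp only [Matrix.sub_apply, Matrix.smul_apply, mul_diagonal, smul_eq_mul]
  ring

/- With `u` the all-ones vector, the columns of `P` are `u` and `e₀ - eₖ` (`k ≠ 0`), and the rows
of `Q` are `u / (m + 1)` and `u / (m + 1) - eₖ` (`k ≠ 0`). -/
theorem exists_eigenbasis_allOnes {K : Type*} [Field K] (m : ℕ) (hm : (m + 1 : K) ≠ 0) :
    ∃ P Q : Matrix (Fin (m + 1)) (Fin (m + 1)) K, P * Q = 1 ∧
      of (fun _ _ => 1) * P = P * diagonal (Pi.single 0 (m + 1 : K)) := by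
  refine ⟨of fun i k =>
      (if k = 0 then 1 else 0) + (if i = 0 then 1 else 0) - (if i = k then 1 else 0),
    of fun k j => (m + 1 : K)⁻¹ - if k = j ∧ j ≠ 0 then 1 else 0, ?_, ?_⟩
  · ext i j
    simp [mul_apply, sub_mul, add_mul, mul_sub, ite_and, Finset.sum_add_distrib,
      Finset.sum_sub_distrib, one_apply]
    rcases eq_or_ne i 0 with rfl | hi <;> rcases eq_or_ne j 0 with rfl | hj
    · simp only [if_true, sub_zero]
      field_simp
    · simp only [hj, hj.symm, if_true, if_false]
      field_simp
      ring
    · simp [hi]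
    · by_cases hij : i = j <;> simp [hi, hj, hij]
  · ext i j
    rw [mul_diagonal, mul_apply]
    by_cases hj : j = 0 <;> simp [hj, Finset.sum_sub_distrib]

end Matrix

namespace SimpleGraph

theorem ncard_neighborSet_eq_degree_s13 (G : SimpleGraph α) (v : α) [Fintype (G.neighborSet v)] :
    (G.neighborSet v).ncard = G.degree v := by
  rw [Set.ncard_eq_toFinset_card', ← card_neighborSet_eq_degree, Set.toFinset_card]

variable [Fintype α] [Fintype β]

theorem adjM_boxProd (G : SimpleGraph α) (H : SimpleGraph β) :
    adjM (G □ H) = adjM G ⊗ₖ (1 : Matrix β β ℂ) + (1 : Matrix α α ℂ) ⊗ₖ adjM H := by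
  ext ⟨u, i⟩ ⟨v, j⟩
  by_cases huv : u = v <;> by_cases hij : i = j <;> simp [adjM, one_apply, huv, hij]

theorem degM_boxProd (G : SimpleGraph α) (H : SimpleGraph β) :
    degM (G □ H) = degM G ⊗ₖ (1 : Matrix β β ℂ) + (1 : Matrix α α ℂ) ⊗ₖ degM H := by
  ext ⟨u, i⟩ ⟨v, j⟩
  by_cases huv : u = v <;> by_cases hij : i = j <;>
    simp [degM, one_apply, huv, hij, ncard_neighborSet_eq_degree_s13, degree_boxProd]

theorem adjM_top [DecidableEq β] : adjM (⊤ : SimpleGraph β) = of (fun _ _ => 1) - 1 := by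
  ext i j
  by_cases hij : i = j <;> simp [adjM, one_apply, hij]

theorem degM_top [DecidableEq β] :
    degM (⊤ : SimpleGraph β) = ((Fintype.card β : ℂ) - 1) • 1 := by
  ext i j
  have hcard : 1 ≤ Fintype.card β := Fintype.card_pos_iff.mpr ⟨i⟩
  by_cases hij : i = j
  · subst hij
    simp only [degM, diagonal_apply_eq, Matrix.smul_apply, one_apply_eq, smul_eq_mul, mul_one,
      neighborSet_top]
    rw [Set.ncard_compl, Set.ncard_singleton, Nat.card_eq_fintype_card, Nat.cast_sub hcard,
      Nat.cast_one]
  · simp [degM, hij]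

theorem Fpoly_boxProd_of_eigenbasis [DecidableEq β] (G : SimpleGraph α) (H : SimpleGraph β)
    (lam μ : ℂ) {P Q : Matrix β β ℂ} {d : β → ℂ} (hPQ : P * Q = 1)
    (hBP : (adjM H - μ • degM H) * P = P * diagonal d) :
    Fpoly (G □ H) lam μ = ∏ i, Fpoly G (lam - d i) μ := by
  have hbox : Fpoly (G □ H) lam μ =
      det ((lam • 1 - (adjM G - μ • degM G)) ⊗ₖ (1 : Matrix β β ℂ)
        - (1 : Matrix α α ℂ) ⊗ₖ (adjM H - μ • degM H)) := by
    rw [Fpoly]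
    congr 1
    ext ⟨u, i⟩ ⟨v, j⟩
    rcases eq_or_ne u v with rfl | huv <;> rcases eq_or_ne i j with rfl | hij
    · simp [adjM_boxProd, degM_boxProd]
      ring
    all_goals simp [adjM_boxProd, degM_boxProd, *]
  rw [hbox, det_kronecker_one_sub_one_kronecker_of_eigenbasis _ hPQ hBP]
  refine Finset.prod_congr rfl fun i _ => ?_
  rw [Fpoly, sub_smul, sub_right_comm]

end SimpleGraph

theorem genCharPoly_of_boxProd_completeGraph
    {α : Type*} [Fintype α] (G : SimpleGraph α)
    (n : ℕ) (hn : 1 ≤ n) (lam μ : ℂ) :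
    Fpoly (G.boxProd (⊤ : SimpleGraph (Fin n))) lam μ
      = Fpoly G (lam + ((n : ℂ) - 1) * (μ - 1)) μ *
          (Fpoly G (lam + ((n : ℂ) - 1) * μ + 1) μ) ^ (n - 1) := by
  obtain ⟨m, rfl⟩ : ∃ m, n = m + 1 := ⟨n - 1, by omega⟩
  obtain ⟨P, Q, hPQ, hJ⟩ := exists_eigenbasis_allOnes (K := ℂ) m (Nat.cast_add_one_ne_zero m)
  have hK : adjM (⊤ : SimpleGraph (Fin (m + 1))) - μ • degM ⊤
      = of (fun _ _ => 1) - (1 + μ * m) • 1 := by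
    rw [SimpleGraph.adjM_top, SimpleGraph.degM_top, Fintype.card_fin]
    push_cast
    module
  have hBP := sub_smul_one_mul_eq_mul_diagonal hJ (1 + μ * m)
  rw [← hK] at hBP
  rw [SimpleGraph.Fpoly_boxProd_of_eigenbasis G ⊤ lam μ hPQ hBP, Fin.prod_univ_succ]
  simp only [Pi.single_eq_same, Pi.single_eq_of_ne (Fin.succ_ne_zero _), Finset.prod_const,
    Finset.card_univ, Fintype.card_fin, Nat.add_sub_cancel]
  have hshift_n : lam - ((m + 1 : ℂ) - (1 + μ * m)) = lam + (((m + 1 : ℕ) : ℂ) - 1) * (μ - 1) := by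
    push_cast; ring
  have hshift_zero : lam - (0 - (1 + μ * m)) = lam + (((m + 1 : ℕ) : ℂ) - 1) * μ + 1 := by
    push_cast; ring
  rw [hshift_n, hshift_zero]

end
end
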